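/- Let φ : {0,1}^m × {0,1}^ℓ → Bool. Define the two-agent sequential decision-making mechanism M with action sets A_1 = {0,1}^m and A_2 = {0,1}^ℓ × {0,1} (agent 2 chooses a pair (b, z)), and deontic constraint γ(a, (b, z)) = φ(a, b) ∧ z. Then (for every a ∈ {0,1}^m there exists b ∈ {0,1}^ℓ with φ(a, b) = true) if and only if M ∈ GDF. -/

import Mathlib

/-! The first agent can never guarantee `γ`, because the second one may always answer with
`z = false`. So only the second (and last) agent can be responsible, and at a violating profile
`(a, (b, z))` it is responsible exactly when some `b'` satisfies `φ(a, b')`: then `(b', true)`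
guarantees `γ`. Every `a` occurs in a violating profile, so GDF says that every `a` has such a `b'`. -/

/-- A sequential decision-making mechanism: `n` agents, finite nonempty
action sets `A 0, …, A (n-1)` (agents act in the order of their indices),
and a deontic constraint `γ` on action profiles. -/
structure Mech where
  n : ℕ
  A : Fin n → Type
  fin : ∀ i, Finite (A i)
  ne : ∀ i, Nonempty (A i)
  γ : (∀ i, A i) → Bool

namespace Mech

/-- An action profile. -/
abbrev Profile (M : Mech) : Type := ∀ i, M.A i

/-- Agent `i` is responsible under profile `s`: the deontic constraint is
violated, and agent `i` had an action `t` that, given the actions of the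
agents before it, would have guaranteed the constraint no matter what the
later agents do. -/
def Responsible (M : Mech) (s : M.Profile) (i : Fin M.n) : Prop :=
  M.γ s = false ∧ ∃ t : M.A i, ∀ s' : M.Profile,
    (∀ j, j < i → s' j = s j) → s' i = t → M.γ s' = true

/-- `cf_i(s_1, …, s_{i-1})`: agent `i` has an action guaranteeing the
constraint, given the prefix of `s` before `i`. -/
def Cf (M : Mech) (s : M.Profile) (i : Fin M.n) : Prop :=
  ∃ t : M.A i, ∀ s' : M.Profile,
    (∀ j, j < i → s' j = s j) → s' i = t → M.γ s' = true

/-- Diffusion-free: at most one responsible agent whenever `γ` is violated. -/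
def DF (M : Mech) : Prop :=
  ∀ s : M.Profile, M.γ s = false →
    ∀ i j, M.Responsible s i → M.Responsible s j → i = j

/-- Gap-free: at least one responsible agent whenever `γ` is violated. -/
def GF (M : Mech) : Prop :=
  ∀ s : M.Profile, M.γ s = false → ∃ i, M.Responsible s i

/-- Gap-and-diffusion-free: exactly one responsible agent whenever `γ` is violated. -/
def GDF (M : Mech) : Prop :=
  ∀ s : M.Profile, M.γ s = false → ∃! i, M.Responsible s i

/-- Responsibility-free: no agent is responsible under any profile. -/
def RF (M : Mech) : Prop :=
  ∀ (s : M.Profile) (i : Fin M.n), ¬ M.Responsible s i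

/-- Agent `j` of the partial mechanism `M_k` as an agent of `M`. -/
def shift (M : Mech) (k : ℕ) (h : k ≤ M.n) (j : Fin (M.n - k)) : Fin M.n :=
  ⟨k + j.val, by omega⟩

/-- Combine a prefix of `s` (first `k` actions) with actions `u` of
agents `k+1, …, n` into a full profile. -/
def glue (M : Mech) (k : ℕ) (h : k ≤ M.n) (s : M.Profile)
    (u : ∀ j : Fin (M.n - k), M.A (M.shift k h j)) : M.Profile := fun i =>
  if hi : i.val < k then s i
  else
    have hj : i.val - k < M.n - k := by omega
    have he : M.shift k h ⟨i.val - k, hj⟩ = i := Fin.ext (by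
      show k + (i.val - k) = i.val
      omega)
    he ▸ u ⟨i.val - k, hj⟩

/-- The partial mechanism `M_k(s_1, …, s_k)`: the first `k` agents have
already acted according to `s`. -/
def part (M : Mech) (k : ℕ) (h : k ≤ M.n) (s : M.Profile) : Mech where
  n := M.n - k
  A := fun j => M.A (M.shift k h j)
  fin := fun _ => M.fin _
  ne := fun _ => M.ne _
  γ := fun u => M.γ (M.glue k h s u)

/-- The restriction of a profile of `M` to a profile of `M_k(s_1, …, s_k)`. -/
def restrict (M : Mech) (k : ℕ) (h : k ≤ M.n) (s : M.Profile) :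
    (M.part k h s).Profile :=
  fun j => s (M.shift k h j)

end Mech

/-- The two-agent mechanism of STATEMENT 9: agent 1 chooses `a`,
agent 2 chooses `(b, z)`, and `γ(a, (b,z)) = φ(a,b) ∧ z`. -/
def gdfMech (m ℓ : ℕ) (φ : (Fin m → Bool) → (Fin ℓ → Bool) → Bool) : Mech where
  n := 2
  A := ![Fin m → Bool, (Fin ℓ → Bool) × Bool]
  fin := by intro i; fin_cases i <;> dsimp <;> infer_instance
  ne := by intro i; fin_cases i <;> dsimp <;> infer_instance
  γ := fun s => φ (s 0) (s 1).1 && (s 1).2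

namespace Mech

variable (M : Mech)

theorem gdf_iff_forall_cf_of_responsible_eq {i : Fin M.n}
    (h : ∀ s j, M.Responsible s j → j = i) :
    M.GDF ↔ ∀ s, M.γ s = false → M.Cf s i := by
  refine forall₂_congr fun s hs => ⟨fun ⟨j, hj, _⟩ => (h s j hj) ▸ hj.2, fun hi => ?_⟩
  exact ⟨i, ⟨hs, hi⟩, h s⟩

theorem cf_iff_of_isTop {s : M.Profile} {i : Fin M.n} (hi : IsTop i) :
    M.Cf s i ↔ ∃ t, M.γ (Function.update s i t) = true := by
  refine exists_congr fun t => ⟨fun h => h _ (fun j hj => ?_) (by simp), fun h s' hlt hi' => ?_⟩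
  · simp [hj.ne]
  · convert h
    funext j
    rcases (hi j).lt_or_eq with hj | rfl
    · simp [hj.ne, hlt j hj]
    · simp [hi']

end Mech

namespace gdfMech

variable {m ℓ : ℕ} {φ : (Fin m → Bool) → (Fin ℓ → Bool) → Bool}

instance : NeZero (gdfMech m ℓ φ).n := ⟨two_ne_zero⟩

theorem gamma_apply (s : (gdfMech m ℓ φ).Profile) :
    (gdfMech m ℓ φ).γ s = (φ (s 0) (s 1).1 && (s 1).2) := rfl

def profile (a : Fin m → Bool) (p : (Fin ℓ → Bool) × Bool) : (gdfMech m ℓ φ).Profile :=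
  Fin.cons a (Fin.cons p finZeroElim)

theorem gamma_profile_false (a : Fin m → Bool) (b : Fin ℓ → Bool) :
    (gdfMech m ℓ φ).γ (profile a (b, false)) = false :=
  Bool.and_false _

theorem not_responsible_zero (s : (gdfMech m ℓ φ).Profile) :
    ¬ (gdfMech m ℓ φ).Responsible s 0 := by
  rintro ⟨-, t, ht⟩
  have := ht (profile t (fun _ => false, false)) (fun j hj => absurd hj (Fin.not_lt_zero j)) rfl
  exact Bool.false_ne_true ((gamma_profile_false _ _).symm.trans this)

theorem eq_one_of_responsible {s : (gdfMech m ℓ φ).Profile} {i : Fin (gdfMech m ℓ φ).n}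
    (h : (gdfMech m ℓ φ).Responsible s i) : i = 1 := by
  match i, h with
  | ⟨0, _⟩, h => exact absurd h (not_responsible_zero s)
  | ⟨1, _⟩, _ => rfl

theorem cf_one_iff (s : (gdfMech m ℓ φ).Profile) :
    (gdfMech m ℓ φ).Cf s 1 ↔ ∃ b, φ (s 0) b = true := by
  rw [Mech.cf_iff_of_isTop _ (fun j => Fin.le_last j)]
  have h01 : (0 : Fin (gdfMech m ℓ φ).n) ≠ 1 := Fin.ne_of_val_ne zero_ne_one
  simp only [gamma_apply, Function.update_of_ne h01, Function.update_self, Bool.and_eq_true]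
  exact ⟨fun ⟨t, ht, _⟩ => ⟨t.1, ht⟩, fun ⟨b, hb⟩ => ⟨(b, true), hb, rfl⟩⟩

end gdfMech

/-- `∀a ∃b, φ(a,b)` holds iff the mechanism is
gap-and-diffusion-free. -/
theorem forall_exists_iff_GDF (m ℓ : ℕ)
    (φ : (Fin m → Bool) → (Fin ℓ → Bool) → Bool) :
    (∀ a : Fin m → Bool, ∃ b : Fin ℓ → Bool, φ a b = true) ↔
      (gdfMech m ℓ φ).GDF := by
  rw [Mech.gdf_iff_forall_cf_of_responsible_eq _ fun _ _ => gdfMech.eq_one_of_responsible]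
  simp only [gdfMech.cf_one_iff]
  exact ⟨fun h s _ => h (s 0), fun h a => h _ (gdfMech.gamma_profile_false a fun _ => false)⟩
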